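/- Let M = (S, A, P, R) be a task (an MDP with deterministic dynamics) with optimal Q-value function Q* and optimal world Q-value function Q̄*. Then for all states s ∈ S and actions a ∈ A, the optimal task Q-value is recovered by maximising the world value function over goals: Q*(s, a) = max_{g ∈ G} Q̄*(s, g, a). (Theorem 1(ii)) -/

import Mathlib

/-!
Formalisation of "World Value Functions" (WVFs).

We model a *task* as a Markov decision process with **deterministic** dynamics:
a transition function `δ : S → A → S`, a set of absorbing states
(`absorbing : S → Prop`; a transition *into* an absorbing state is a terminal
transition), and a reward function `R s a` giving the reward `R(s, a, s')` of
the deterministic transition `s' = δ s a`.  After a terminal transition the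
episode is over: absorbing states are frozen and yield reward `0`.

Values are undiscounted sums of rewards, taken in the extended reals `EReal`
(the return of a policy is the `liminf` of its partial sums of rewards, which
is the genuine sum whenever the episode terminates).
-/

open Filter

open scoped Classical

noncomputable section

/-- A task: a Markov decision process `(S, A, P, R)` with deterministic
transition dynamics. -/
structure DetMDP (S A : Type) where
  /-- the deterministic transition dynamics: `δ s a` is the next state -/
  δ : S → A → S
  /-- absorbing states; a transition into an absorbing state is terminal -/
  absorbing : S → Prop
  /-- the reward `R s a = R(s, a, δ s a)` -/
  R : S → A → ℝ

namespace DetMDP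

variable {S A : Type}

/-- The agent's internal goal space `G ⊆ S`: all states where the agent
experiences a terminal transition. -/
def goalSpace (M : DetMDP S A) : Set S :=
  {s | ∃ a, M.absorbing (M.δ s a)}

/-- The extended reward function
`R̄(s, g, a, s') = r̄_MIN` if `g ≠ s` and `s'` is absorbing, `R(s, a, s')`
otherwise (here `s' = δ s a` is determined by the deterministic dynamics). -/
def extR (M : DetMDP S A) (rmin : ℝ) (s g : S) (a : A) : ℝ :=
  if g ≠ s ∧ M.absorbing (M.δ s a) then rmin else M.R s a

/-- One step of execution of a (deterministic, stationary) policy `π`;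
absorbing states are frozen. -/
def stepTo (M : DetMDP S A) (π : S → A) (s : S) : S :=
  if M.absorbing s then s else M.δ s (π s)

/-- The (deterministic) state trajectory obtained by following `π` from `s`. -/
def traj (M : DetMDP S A) (π : S → A) (s : S) : ℕ → S
  | 0 => s
  | n + 1 => M.stepTo π (M.traj π s n)

/-- The reward (w.r.t. the reward function `r`) collected at time `t`
when following `π` from `s`; it is `0` once the episode has terminated. -/
def rew (M : DetMDP S A) (r : S → A → ℝ) (π : S → A) (s : S) (t : ℕ) : ℝ :=
  if M.absorbing (M.traj π s t) then 0
  else r (M.traj π s t) (π (M.traj π s t))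

/-- The undiscounted return `∑_{t=0}^∞ r_t` collected by `π` from `s`
(as an extended real number). -/
def ret (M : DetMDP S A) (r : S → A → ℝ) (π : S → A) (s : S) : EReal :=
  liminf (fun n => ((∑ t ∈ Finset.range n, M.rew r π s t : ℝ) : EReal)) atTop

/-- The value function `V^π` of a policy for the task. -/
def Vpol (M : DetMDP S A) (π : S → A) (s : S) : EReal :=
  M.ret M.R π s

/-- The action-value function `Q^π` of a policy for the task. -/
def Qpol (M : DetMDP S A) (π : S → A) (s : S) (a : A) : EReal :=
  if M.absorbing s then 0 else (M.R s a : EReal) + M.ret M.R π (M.δ s a)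

/-- The optimal value function `V*` of the task. -/
def Vstar (M : DetMDP S A) (s : S) : EReal :=
  ⨆ π : S → A, M.Vpol π s

/-- The optimal action-value function `Q*(s, a) = max_π Q^π(s, a)` of the task. -/
def Qstar (M : DetMDP S A) (s : S) (a : A) : EReal :=
  ⨆ π : S → A, M.Qpol π s a

/-- The return of the world policy `pibar : S × G → A` for goal `g` from `s`:
the undiscounted sum of extended rewards `R̄(·, g, ·)`. -/
def wRet (M : DetMDP S A) (rmin : ℝ) (pibar : S → S → A) (g s : S) : EReal :=
  M.ret (fun x b => M.extR rmin x g b) (fun x => pibar x g) s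

/-- The world action-value function `Q̄^pibar(s, g, a)` of a world policy. -/
def wQpol (M : DetMDP S A) (rmin : ℝ) (pibar : S → S → A) (s g : S) (a : A) : EReal :=
  if M.absorbing s then 0
  else (M.extR rmin s g a : EReal) + M.wRet rmin pibar g (M.δ s a)

/-- The optimal world action-value function (the WVF)
`Q̄*(s, g, a) = max_pibar Q̄^pibar(s, g, a)`. -/
def wQstar (M : DetMDP S A) (rmin : ℝ) (s g : S) (a : A) : EReal :=
  ⨆ pibar : S → S → A, M.wQpol rmin pibar s g a

/-- The optimal world value function `V̄*(s, g) = max_a Q̄*(s, g, a)`. -/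
def wVstar (M : DetMDP S A) (rmin : ℝ) (s g : S) : EReal :=
  ⨆ a : A, M.wQstar rmin s g a

/-- Following `π` from `s`, the episode terminates with terminal state `g`,
i.e. the terminal transition is experienced at `g` (`s_T = g`). -/
def reaches (M : DetMDP S A) (π : S → A) (s g : S) : Prop :=
  ∃ n, M.traj π s n = g ∧ M.absorbing (M.traj π s (n + 1))

/-- The probability `P^pibar_s(s_T = g)` of reaching goal `g` from `s` under a
world policy `pibar` (it is `0` or `1`, since everything is deterministic). -/
def reachProb (M : DetMDP S A) (pibar : S → S → A) (s g : S) : ℝ :=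
  if M.reaches (fun x => pibar x g) s g then 1 else 0

/-- `g` is reachable from `s`. -/
def reachable (M : DetMDP S A) (s g : S) : Prop :=
  ∃ π : S → A, M.reaches π s g

/-- The penalty `rmin` (`r̄_MIN`) is strictly smaller than the least possible
return of the task. -/
def PenaltyOK (M : DetMDP S A) (rmin : ℝ) : Prop :=
  ∀ (π : S → A) (s : S), (rmin : EReal) < M.ret M.R π s

/-- `τ` is a task-specific reward function over the background MDP `M₀`:
it is non-zero only for transitions entering terminal (absorbing) states. -/
def IsTaskReward (M₀ : DetMDP S A) (τ : S → A → ℝ) : Prop :=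
  ∀ s a, ¬ M₀.absorbing (M₀.δ s a) → τ s a = 0

/-- The task over the background MDP (world) `M₀` specified by a task-specific
reward `τ`: the same state space, action space and dynamics as `M₀`, with
reward function `R_M = R₀ + R_M^τ`. -/
def withTask (M₀ : DetMDP S A) (τ : S → A → ℝ) : DetMDP S A :=
  { δ := M₀.δ, absorbing := M₀.absorbing, R := fun s a => M₀.R s a + τ s a }

/-- `τ` is a task of the world `M₀` whose terminal rewards lie in `[Rlo, Rhi]`. -/
def InWorld (M₀ : DetMDP S A) (Rlo Rhi : ℝ) (τ : S → A → ℝ) : Prop :=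
  M₀.IsTaskReward τ ∧ ∀ s a, M₀.absorbing (M₀.δ s a) → Rlo ≤ τ s a ∧ τ s a ≤ Rhi

/-!
Under deterministic dynamics a policy's trajectory makes at most one terminal
transition, since absorbing states are frozen. Running a task policy `π` as the
world policy `(x, g) ↦ π x` with `g` the state of that terminal transition (any
goal if there is none, `s` itself if the first step is terminal), the extended
rewards never differ from the task rewards, so every `Q^π(s, a)` is some
`Q̄^π̄(s, g, a)`. Conversely the penalty `r̄_MIN` lies below the return of any
policy that terminates at once, hence below every terminal reward, so extended
rewards never exceed task rewards and `Q̄^π̄(s, g, a) ≤ Q^{π̄(·, g)}(s, a)`.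
-/

def IsTerminalStep (M : DetMDP S A) (π : S → A) (x : S) (t : ℕ) : Prop :=
  ¬ M.absorbing (M.traj π x t) ∧ M.absorbing (M.traj π x (t + 1))

section Returns

variable {M : DetMDP S A} {π : S → A} {x : S}

lemma traj_succ_of_not_absorbing {t : ℕ} (h : ¬ M.absorbing (M.traj π x t)) :
    M.traj π x (t + 1) = M.δ (M.traj π x t) (π (M.traj π x t)) := by
  rw [traj, stepTo, if_neg h]

lemma absorbing_traj_of_le {n m : ℕ} (h : M.absorbing (M.traj π x n)) (hnm : n ≤ m) :
    M.absorbing (M.traj π x m) := by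
  induction m, hnm using Nat.le_induction with
  | base => exact h
  | succ m _ ih => rwa [traj, stepTo, if_pos ih]

lemma IsTerminalStep.eq {t₁ t₂ : ℕ} (h₁ : M.IsTerminalStep π x t₁)
    (h₂ : M.IsTerminalStep π x t₂) : t₁ = t₂ := by
  by_contra hne
  rcases Nat.lt_or_gt_of_ne hne with hlt | hlt
  · exact h₂.1 (absorbing_traj_of_le h₁.2 hlt)
  · exact h₁.1 (absorbing_traj_of_le h₂.2 hlt)

lemma IsTerminalStep.traj_mem_goalSpace {t : ℕ} (h : M.IsTerminalStep π x t) :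
    M.traj π x t ∈ M.goalSpace :=
  ⟨π (M.traj π x t), traj_succ_of_not_absorbing h.1 ▸ h.2⟩

lemma exists_mem_goalSpace_forall_isTerminalStep (hG : M.goalSpace.Nonempty) (π : S → A)
    (x : S) : ∃ g ∈ M.goalSpace, ∀ t, M.IsTerminalStep π x t → M.traj π x t = g := by
  by_cases hterm : ∃ t, M.IsTerminalStep π x t
  · obtain ⟨t₀, ht₀⟩ := hterm
    exact ⟨_, ht₀.traj_mem_goalSpace, fun t ht => by rw [ht.eq ht₀]⟩
  · push Not at hterm
    obtain ⟨g, hg⟩ := hG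
    exact ⟨g, hg, fun t ht => absurd ht (hterm t)⟩

lemma ret_congr {r r' : S → A → ℝ} (h : ∀ t, M.rew r π x t = M.rew r' π x t) :
    M.ret r π x = M.ret r' π x := by
  simp only [ret, h]

lemma ret_mono {r r' : S → A → ℝ} (h : ∀ t, M.rew r π x t ≤ M.rew r' π x t) :
    M.ret r π x ≤ M.ret r' π x :=
  liminf_le_liminf (.of_forall fun _ => EReal.coe_le_coe_iff.2 (Finset.sum_le_sum fun t _ => h t))

lemma ret_of_absorbing (r : S → A → ℝ) (h : M.absorbing x) : M.ret r π x = 0 := by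
  have hrew : ∀ t, M.rew r π x t = 0 := fun t =>
    if_pos (absorbing_traj_of_le (n := 0) h t.zero_le)
  simp only [ret, hrew, Finset.sum_const_zero, EReal.coe_zero, liminf_const]

lemma ret_of_absorbing_δ (r : S → A → ℝ) (hx : ¬ M.absorbing x)
    (hδ : M.absorbing (M.δ x (π x))) : M.ret r π x = r x (π x) := by
  have hrew : ∀ t, M.rew r π x t = if t = 0 then r x (π x) else 0 := by
    rintro (_ | t)
    · simp [rew, traj, hx]
    · have hx₁ : M.absorbing (M.traj π x 1) := by rwa [traj_succ_of_not_absorbing (t := 0) (x := x) hx]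
      simp [rew, absorbing_traj_of_le hx₁ (Nat.le_add_left 1 t)]
  have hsum : ∀ᶠ n in atTop,
      ((∑ t ∈ Finset.range n, M.rew r π x t : ℝ) : EReal) = r x (π x) := by
    filter_upwards [eventually_ge_atTop 1] with n hn
    simp [hrew, Finset.mem_range.2 hn]
  rw [ret, liminf_congr hsum, liminf_const]

end Returns

section WorldValues

variable {M : DetMDP S A} {rmin : ℝ}

lemma extR_le_R (hpen : M.PenaltyOK rmin) {x g : S} {b : A} (hx : ¬ M.absorbing x) :
    M.extR rmin x g b ≤ M.R x b := by
  unfold extR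
  split_ifs with hb
  · have hlt := hpen (fun _ => b) x
    rw [ret_of_absorbing_δ _ hx hb.2] at hlt
    exact EReal.coe_lt_coe_iff.1 hlt |>.le
  · exact le_rfl

lemma wRet_le_ret (hpen : M.PenaltyOK rmin) (pibar : S → S → A) (g x : S) :
    M.wRet rmin pibar g x ≤ M.ret M.R (fun y => pibar y g) x := by
  refine ret_mono fun t => ?_
  unfold rew
  split_ifs with ht
  exacts [le_rfl, extR_le_R hpen ht]

lemma wRet_eq_ret {π : S → A} {g x : S}
    (hg : ∀ t, M.IsTerminalStep π x t → M.traj π x t = g) :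
    M.wRet rmin (fun y _ => π y) g x = M.ret M.R π x := by
  refine ret_congr fun t => ?_
  unfold rew
  split_ifs with ht
  · rfl
  · refine if_neg fun ⟨hne, hδ⟩ => hne (hg t ⟨ht, ?_⟩).symm
    rwa [traj_succ_of_not_absorbing ht]

lemma wQpol_le_Qpol (hpen : M.PenaltyOK rmin) (pibar : S → S → A) (s g : S) (a : A) :
    M.wQpol rmin pibar s g a ≤ M.Qpol (fun y => pibar y g) s a := by
  unfold wQpol Qpol
  split_ifs with hs
  · exact le_rfl
  · exact add_le_add (EReal.coe_le_coe_iff.2 (extR_le_R hpen hs)) (wRet_le_ret hpen pibar g _)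

lemma exists_wQpol_eq_Qpol (hG : M.goalSpace.Nonempty) (π : S → A) (s : S) (a : A) :
    ∃ g ∈ M.goalSpace, M.wQpol rmin (fun y _ => π y) s g a = M.Qpol π s a := by
  by_cases hs : M.absorbing s
  · obtain ⟨g, hg⟩ := hG
    exact ⟨g, hg, by simp only [wQpol, Qpol, if_pos hs]⟩
  simp only [wQpol, Qpol, if_neg hs]
  by_cases hδ : M.absorbing (M.δ s a)
  · refine ⟨s, ⟨a, hδ⟩, ?_⟩
    simp only [extR, ne_eq, not_true_eq_false, false_and, if_false, wRet,
      ret_of_absorbing _ hδ]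
  · obtain ⟨g, hg, hterm⟩ := exists_mem_goalSpace_forall_isTerminalStep hG π (M.δ s a)
    refine ⟨g, hg, ?_⟩
    rw [extR, if_neg fun h => hδ h.2, wRet_eq_ret hterm]

end WorldValues

theorem Qstar_eq_max_wQstar_over_goals_general
    (M : DetMDP S A) (rmin : ℝ)
    (hpen : M.PenaltyOK rmin)
    (hG : M.goalSpace.Nonempty)
    (s : S) (a : A) :
    M.Qstar s a = ⨆ g ∈ M.goalSpace, M.wQstar rmin s g a := by
  apply le_antisymm
  · refine iSup_le fun π => ?_
    obtain ⟨g, hg, hQ⟩ := exists_wQpol_eq_Qpol (rmin := rmin) hG π s a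
    exact hQ ▸ le_iSup₂_of_le g hg (le_iSup (M.wQpol rmin · s g a) _)
  · exact iSup₂_le fun g _ => iSup_le fun pibar =>
      (wQpol_le_Qpol hpen pibar s g a).trans (le_iSup (M.Qpol · s a) _)

/-- **Theorem 1(ii)**: for a task `M = (S, A, P, R)` with optimal `Q`-value
function `Q*` and optimal world `Q`-value function `Q̄*`, the optimal task
`Q`-value is recovered by maximising the world value function over goals:
for all `s ∈ S` and `a ∈ A`, `Q*(s, a) = max_{g ∈ G} Q̄*(s, g, a)`. -/
theorem Qstar_eq_max_wQstar_over_goals [Fintype S] [Fintype A] [Nonempty A]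
    (M : DetMDP S A) (Rlo Rhi rmin : ℝ)
    (hbdd : ∀ (s : S) (a : A), Rlo ≤ M.R s a ∧ M.R s a ≤ Rhi)
    (hpen : M.PenaltyOK rmin)
    (hG : M.goalSpace.Nonempty)
    (s : S) (a : A) :
    M.Qstar s a = ⨆ g ∈ M.goalSpace, M.wQstar rmin s g a :=
  Qstar_eq_max_wQstar_over_goals_general M rmin hpen hG s a

end DetMDP
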